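/- Let c ≥ 0, β ∈ ℝ, g > 0, λ > 0, and let J : ℝ → ℝ be continuous, strictly positive, and 2π-periodic. If f_{c,β}(λ) < g · min_{x∈ℝ} J(x), then every differentiable φ : ℝ → ℝ satisfying φ'(z) = λ h(φ(z)) + λ g R_λ(z) w(φ(z)) for all z ∈ ℝ and φ(0) = π satisfies φ(π) − φ(−π) > 2π. -/

import Mathlib

/-- The Heaviside step function. -/
noncomputable def Heav (z : ℝ) : ℝ := if z < 0 then 0 else 1

/-- The synaptic profile `r_λ(z)`, given by formula (3.10); on `(-π, π) \ {0}` (the only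
values relevant to the integrals below) it equals
`(1/2) e^{-(λz + (c/2)H(z))} [H(z) + (e^{2πλ + c/2} - 1)⁻¹]`. -/
noncomputable def rTheta (c lam z : ℝ) : ℝ :=
  (1 / 2) * Real.exp (-(lam * z + (c / 2) * Heav z)) *
    (Heav z + (Real.exp (2 * Real.pi * lam + c / 2) - 1)⁻¹)

/-- `R_λ(z) = ∫_{-π}^{π} J(z - y) r_λ(y) dy` (formula (3.13)). -/
noncomputable def RTheta (J : ℝ → ℝ) (c lam z : ℝ) : ℝ :=
  ∫ y in (-Real.pi)..Real.pi, J (z - y) * rTheta c lam y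

/-- `h(θ) = 1 - cos θ + β(1 + cos θ)`. -/
noncomputable def hTheta (β θ : ℝ) : ℝ := 1 - Real.cos θ + β * (1 + Real.cos θ)

/-- `w(θ) = 1 + cos θ`. -/
noncomputable def wTheta (θ : ℝ) : ℝ := 1 + Real.cos θ

/-- `ρ_c(λ) = (e^{2πλ} - 1)/(e^{2πλ + c/2} - 1)`. -/
noncomputable def rhoC (c lam : ℝ) : ℝ :=
  (Real.exp (2 * Real.pi * lam) - 1) / (Real.exp (2 * Real.pi * lam + c / 2) - 1)

/-- `f_{c,β}(λ) = (1 - 4βλ²)/(2λ ρ_c(λ))`. -/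
noncomputable def fCB (c β lam : ℝ) : ℝ := (1 - 4 * β * lam ^ 2) / (2 * lam * rhoC c lam)

/-! Write `h_b(θ) = hTheta b θ = (1 - cos θ) + b (1 + cos θ)`. For `s > 0` the continuous lift
`A_s = rescaledAngle s` of `θ ↦ 2 arctan (tan (θ / 2) / s)` has `A_s' = 2s / h_{s²}` and
`A_s (θ + 2π) = A_s θ + 2π`, so it turns the flow `θ' = λ h_{s²}(θ)` into uniform rotation at
speed `2λs`. Since `r_λ ≥ 0` has total mass `ρ_c(λ) / (2λ)`, we get `R_λ ≥ m ρ_c(λ) / (2λ)` with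
`m = min J`, and the equation reads `φ' = λ h_{β + g R_λ}(φ) ≥ λ h_{s²}(φ)` for
`s² = β + g m ρ_c(λ) / (2λ)`. Hence `A_s ∘ φ` gains at least `4πλs` over `[-π, π]`, and
`f_{c,β}(λ) < g m` says exactly `2λs > 1`. -/

open MeasureTheory Real Set

lemma integral_exp_neg_mul {lam : ℝ} (hlam : lam ≠ 0) (a b : ℝ) :
    ∫ y in a..b, exp (-(lam * y)) = (exp (-(lam * a)) - exp (-(lam * b))) / lam := by
  simp only [← neg_mul]
  rw [intervalIntegral.integral_comp_mul_left (fun y => exp y) (neg_ne_zero.2 hlam),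
    integral_exp, smul_eq_mul]
  field_simp
  ring

section rTheta

variable {c lam : ℝ}

lemma one_lt_exp_two_pi_mul_add (hc : 0 ≤ c) (hlam : 0 < lam) :
    1 < exp (2 * π * lam + c / 2) :=
  one_lt_exp_iff.2 (by positivity)

lemma rTheta_eqOn_Iio :
    EqOn (rTheta c lam)
      (fun y => (2 * (exp (2 * π * lam + c / 2) - 1))⁻¹ * exp (-(lam * y))) (Iio 0) := by
  intro y (hy : y < 0)
  simp only [rTheta, Heav, if_pos hy, mul_inv]
  ring_nf

lemma rTheta_eqOn_Ici (hc : 0 ≤ c) (hlam : 0 < lam) :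
    EqOn (rTheta c lam)
      (fun y => (2 * (exp (2 * π * lam + c / 2) - 1))⁻¹ * exp (2 * π * lam) * exp (-(lam * y)))
      (Ici 0) := by
  intro y (hy : 0 ≤ y)
  have hE : exp (2 * π * lam + c / 2) - 1 ≠ 0 := by
    linarith [one_lt_exp_two_pi_mul_add hc hlam]
  have hsplit : exp (2 * π * lam) = exp (-(c / 2)) * exp (2 * π * lam + c / 2) := by
    rw [← exp_add]; ring_nf
  simp only [rTheta, Heav, if_neg (not_lt.2 hy)]
  rw [hsplit, show -(lam * y + c / 2 * 1) = -(c / 2) + -(lam * y) by ring, exp_add]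
  generalize exp (2 * π * lam + c / 2) = E at hE ⊢
  field_simp
  ring

lemma rTheta_nonneg (hc : 0 ≤ c) (hlam : 0 < lam) (z : ℝ) : 0 ≤ rTheta c lam z := by
  have hH : 0 ≤ Heav z := by unfold Heav; split <;> norm_num
  have hK : 0 ≤ (exp (2 * π * lam + c / 2) - 1)⁻¹ :=
    inv_nonneg.2 (by linarith [one_lt_exp_two_pi_mul_add hc hlam])
  unfold rTheta
  positivity

lemma intervalIntegrable_rTheta_neg_pi_zero :
    IntervalIntegrable (rTheta c lam) volume (-π) 0 :=
  (Continuous.intervalIntegrable (by fun_prop) _ _).congr_uIoo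
    (rTheta_eqOn_Iio.symm.mono
      ((uIoo_of_le (neg_nonpos.2 pi_pos.le)).subset.trans Ioo_subset_Iio_self))

lemma intervalIntegrable_rTheta_zero_pi (hc : 0 ≤ c) (hlam : 0 < lam) :
    IntervalIntegrable (rTheta c lam) volume 0 π :=
  (Continuous.intervalIntegrable (by fun_prop) _ _).congr_uIoo
    ((rTheta_eqOn_Ici hc hlam).symm.mono
      ((uIoo_of_le pi_pos.le).subset.trans (Ioo_subset_Ioi_self.trans Ioi_subset_Ici_self)))

lemma intervalIntegrable_rTheta (hc : 0 ≤ c) (hlam : 0 < lam) :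
    IntervalIntegrable (rTheta c lam) volume (-π) π :=
  intervalIntegrable_rTheta_neg_pi_zero.trans (intervalIntegrable_rTheta_zero_pi hc hlam)

lemma integral_rTheta (hc : 0 ≤ c) (hlam : 0 < lam) :
    ∫ y in (-π)..π, rTheta c lam y = rhoC c lam / (2 * lam) := by
  rw [← intervalIntegral.integral_add_adjacent_intervals intervalIntegrable_rTheta_neg_pi_zero
      (intervalIntegrable_rTheta_zero_pi hc hlam),
    intervalIntegral.integral_congr_uIoo (rTheta_eqOn_Iio.mono
      ((uIoo_of_le (neg_nonpos.2 pi_pos.le)).subset.trans Ioo_subset_Iio_self)),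
    intervalIntegral.integral_congr_uIoo ((rTheta_eqOn_Ici hc hlam).mono
      ((uIoo_of_le pi_pos.le).subset.trans (Ioo_subset_Ioi_self.trans Ioi_subset_Ici_self))),
    intervalIntegral.integral_const_mul,
    intervalIntegral.integral_const_mul, integral_exp_neg_mul hlam.ne',
    integral_exp_neg_mul hlam.ne']
  have hE : exp (2 * π * lam + c / 2) - 1 ≠ 0 := by
    linarith [one_lt_exp_two_pi_mul_add hc hlam]
  have hshift : exp (2 * π * lam) * exp (-(lam * π)) = exp (-(lam * -π)) := by
    rw [← exp_add]; ring_nf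
  simp only [mul_zero, neg_zero, exp_zero, rhoC]
  rw [← hshift]
  field_simp
  ring

end rTheta

lemma mul_rhoC_div_le_RTheta {c lam m : ℝ} (hc : 0 ≤ c) (hlam : 0 < lam) {J : ℝ → ℝ}
    (hJ : Continuous J) (hm : ∀ x, m ≤ J x) (z : ℝ) :
    m * (rhoC c lam / (2 * lam)) ≤ RTheta J c lam z := by
  have hr := intervalIntegrable_rTheta hc hlam
  rw [← integral_rTheta hc hlam, ← intervalIntegral.integral_const_mul]
  exact intervalIntegral.integral_mono_on (by linarith [pi_pos]) (hr.const_mul m)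
    (hr.continuousOn_mul (by fun_prop))
    fun y _ => mul_le_mul_of_nonneg_right (hm (z - y)) (rTheta_nonneg hc hlam y)

lemma rhoC_pos {c lam : ℝ} (hc : 0 ≤ c) (hlam : 0 < lam) : 0 < rhoC c lam :=
  div_pos (by linarith [one_lt_exp_iff.2 (by positivity : 0 < 2 * π * lam)])
    (by linarith [one_lt_exp_two_pi_mul_add hc hlam])

lemma fCB_lt_iff {c β lam K : ℝ} (hlam : 0 < lam) (hρ : 0 < rhoC c lam) :
    fCB c β lam < K ↔ 1 < 4 * lam ^ 2 * (β + K * (rhoC c lam / (2 * lam))) := by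
  have hexpand : 4 * lam ^ 2 * (β + K * (rhoC c lam / (2 * lam)))
      = 4 * β * lam ^ 2 + K * (2 * lam * rhoC c lam) := by
    field_simp
    ring
  rw [fCB, div_lt_iff₀ (by positivity), hexpand]
  constructor <;> intro h <;> linarith

lemma hTheta_pos {b : ℝ} (hb : 0 < b) (θ : ℝ) : 0 < hTheta b θ := by
  unfold hTheta
  nlinarith [cos_le_one θ, mul_nonneg hb.le (neg_le_iff_add_nonneg'.1 (neg_one_le_cos θ))]

lemma hTheta_le_hTheta {b b' : ℝ} (h : b ≤ b') (θ : ℝ) : hTheta b θ ≤ hTheta b' θ := by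
  unfold hTheta
  nlinarith [neg_one_le_cos θ]

lemma hasDerivAt_hTheta (b θ : ℝ) : HasDerivAt (hTheta b) ((1 - b) * sin θ) θ :=
  (((hasDerivAt_cos θ).const_sub 1).add
    (((hasDerivAt_cos θ).const_add 1).const_mul b)).congr_deriv (by ring)

section rescaledAngle

variable {s : ℝ}

noncomputable def rescaledAngle (s θ : ℝ) : ℝ :=
  θ + 2 * arctan ((1 - s) * sin θ / hTheta s θ)

lemma hasDerivAt_rescaledAngle (hs : 0 < s) (θ : ℝ) :
    HasDerivAt (rescaledAngle s) (2 * s / hTheta (s ^ 2) θ) θ := by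
  have hQ := (hTheta_pos hs θ).ne'
  have hD := (hTheta_pos (pow_pos hs 2) θ).ne'
  have hquot := ((hasDerivAt_sin θ).const_mul (1 - s)).div (hasDerivAt_hTheta s θ) hQ
  refine ((hasDerivAt_id θ).add (hquot.arctan.const_mul 2)).congr_deriv ?_
  have hpyth : hTheta s θ ^ 2 + ((1 - s) * sin θ) ^ 2 = 2 * hTheta (s ^ 2) θ := by
    unfold hTheta; linear_combination (1 - s) ^ 2 * sin_sq_add_cos_sq θ
  have hnum : (1 - s) * cos θ * hTheta s θ - (1 - s) * sin θ * ((1 - s) * sin θ)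
      = 2 * s - hTheta (s ^ 2) θ := by
    unfold hTheta; linear_combination -(1 - s) ^ 2 * sin_sq_add_cos_sq θ
  simp only [Pi.div_apply, hnum]
  field_simp
  linear_combination (hTheta (s ^ 2) θ - 2 * s) * hpyth

lemma rescaledAngle_add_two_pi (s θ : ℝ) :
    rescaledAngle s (θ + 2 * π) = rescaledAngle s θ + 2 * π := by
  simp only [rescaledAngle, hTheta, sin_add_two_pi, cos_add_two_pi]
  ring

lemma rescaledAngle_strictMono (hs : 0 < s) : StrictMono (rescaledAngle s) :=
  strictMono_of_deriv_pos fun θ => by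
    rw [(hasDerivAt_rescaledAngle hs θ).deriv]
    exact div_pos (by linarith) (hTheta_pos (pow_pos hs 2) θ)

lemma rescaledAngle_add_le_of_le_deriv (hs : 0 < s) {lam : ℝ} {φ : ℝ → ℝ}
    (hφ : Differentiable ℝ φ) (hφ' : ∀ z, lam * hTheta (s ^ 2) (φ z) ≤ deriv φ z)
    {a b : ℝ} (hab : a ≤ b) :
    rescaledAngle s (φ a) + 2 * lam * s * (b - a) ≤ rescaledAngle s (φ b) := by
  have hderiv : ∀ z, HasDerivAt (fun z => rescaledAngle s (φ z) - 2 * lam * s * z)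
      (2 * s / hTheta (s ^ 2) (φ z) * deriv φ z - 2 * lam * s) z := fun z =>
    ((hasDerivAt_rescaledAngle hs (φ z)).comp z (hφ z).hasDerivAt).sub
      ((hasDerivAt_id z).const_mul (2 * lam * s) |>.congr_deriv (mul_one _))
  have hmono : Monotone fun z => rescaledAngle s (φ z) - 2 * lam * s * z :=
    monotone_of_deriv_nonneg (fun z => (hderiv z).differentiableAt) fun z => by
      rw [(hderiv z).deriv, sub_nonneg]
      have hD := hTheta_pos (pow_pos hs 2) (φ z)
      calc 2 * lam * s = 2 * s / hTheta (s ^ 2) (φ z) * (lam * hTheta (s ^ 2) (φ z)) := by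
            field_simp
        _ ≤ 2 * s / hTheta (s ^ 2) (φ z) * deriv φ z := by gcongr; exact hφ' z
  linarith [hmono hab]

lemma add_two_pi_lt_of_rescaledAngle_lt (hs : 0 < s) {x y : ℝ}
    (h : rescaledAngle s x + 2 * π < rescaledAngle s y) : x + 2 * π < y :=
  (rescaledAngle_strictMono hs).lt_iff_lt.1 (by rwa [rescaledAngle_add_two_pi])

end rescaledAngle

theorem rotating_waves_stmt_17_general (c β g lam : ℝ) (hc : 0 ≤ c) (hg : 0 < g) (hlam : 0 < lam)
    (J : ℝ → ℝ) (hJcont : Continuous J) (hJpos : ∀ x : ℝ, 0 < J x)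
    (hineq : fCB c β lam < g * sInf (Set.range J)) :
    ∀ φ : ℝ → ℝ, Differentiable ℝ φ →
      (∀ z : ℝ, deriv φ z
        = lam * hTheta β (φ z) + lam * g * RTheta J c lam z * wTheta (φ z)) →
      φ 0 = Real.pi →
      2 * Real.pi < φ Real.pi - φ (-Real.pi) := by
  intro φ hφ hode _
  set m := sInf (range J)
  have hmJ : ∀ x, m ≤ J x := fun x =>
    csInf_le ⟨0, by rintro _ ⟨y, rfl⟩; exact (hJpos y).le⟩ (mem_range_self x)
  set κ := β + g * (m * (rhoC c lam / (2 * lam)))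
  have hκ : 1 < 4 * lam ^ 2 * κ := by
    simpa only [κ, mul_assoc] using (fCB_lt_iff hlam (rhoC_pos hc hlam)).1 hineq
  have hκpos : 0 < κ := pos_of_mul_pos_right (by linarith : 0 < 4 * lam ^ 2 * κ) (by positivity)
  set s := √κ
  have hs : 0 < s := sqrt_pos.2 hκpos
  have hlams : 1 < 2 * lam * s := by
    have hsq : (2 * lam * s) ^ 2 = 4 * lam ^ 2 * κ := by
      rw [mul_pow, sq_sqrt hκpos.le]; ring
    exact lt_of_pow_lt_pow_left₀ 2 (by positivity) (by rwa [hsq, one_pow])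
  have hcomp : ∀ z, lam * hTheta (s ^ 2) (φ z) ≤ deriv φ z := fun z =>
    calc lam * hTheta (s ^ 2) (φ z) ≤ lam * hTheta (β + g * RTheta J c lam z) (φ z) := by
          refine mul_le_mul_of_nonneg_left (hTheta_le_hTheta ?_ _) hlam.le
          rw [sq_sqrt hκpos.le]
          linarith [mul_le_mul_of_nonneg_left (mul_rhoC_div_le_RTheta hc hlam hJcont hmJ z) hg.le]
      _ = deriv φ z := by rw [hode z]; unfold hTheta wTheta; ring
  have hgain := rescaledAngle_add_le_of_le_deriv hs hφ hcomp (neg_le_self pi_pos.le)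
  refine lt_sub_iff_add_lt'.2 (add_two_pi_lt_of_rescaledAngle_lt hs ?_)
  nlinarith [pi_pos]

/-- Lemma 5.8 (lemma `glar`): if `f_{c,β}(λ) < g · min J`, then the solution of
(3.18)-(3.19) satisfies `φ_λ(π) - φ_λ(-π) > 2π` (i.e. `Ψ(λ) > 1`). -/
theorem rotating_waves_stmt_17 (c β g lam : ℝ) (hc : 0 ≤ c) (hg : 0 < g) (hlam : 0 < lam)
    (J : ℝ → ℝ) (hJcont : Continuous J) (hJpos : ∀ x : ℝ, 0 < J x)
    (hJper : ∀ x : ℝ, J (x + 2 * Real.pi) = J x)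
    (hineq : fCB c β lam < g * sInf (Set.range J)) :
    ∀ φ : ℝ → ℝ, Differentiable ℝ φ →
      (∀ z : ℝ, deriv φ z
        = lam * hTheta β (φ z) + lam * g * RTheta J c lam z * wTheta (φ z)) →
      φ 0 = Real.pi →
      2 * Real.pi < φ Real.pi - φ (-Real.pi) :=
  rotating_waves_stmt_17_general c β g lam hc hg hlam J hJcont hJpos hineq
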